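/- The pair (w*, g*) = (T/I, conj(a)/T) is the unique global minimizer of the weighted MSE ξ on (0, ∞) × ℂ: for all w > 0 and g ∈ ℂ one has ξ(w, g) ≥ 1 − ln(T/I), with equality if and only if (w, g) = (w*, g*). -/

import Mathlib

/-! Completing the square gives `ε(g) = T ‖g − g*‖² + I/T`, so `ε ≥ I/T` with equality only at
`g*`. For fixed `g`, the map `w ↦ w ε − ln w` is minimised at `w = 1/ε` with value `1 + ln ε`,
because `x − 1 − ln x ≥ 0` with equality only at `x = 1`. Chaining the two minimisations,
`ξ(w, g) ≥ 1 + ln ε(g) ≥ 1 + ln(I/T)`, and equality forces both to be tight. -/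

open Real

theorem Real.one_add_log_le_mul_sub_log {c w : ℝ} (hc : 0 < c) (hw : 0 < w) :
    1 + log c ≤ w * c - log w := by
  have h := log_le_sub_one_of_pos (mul_pos hw hc)
  rw [log_mul hw.ne' hc.ne'] at h
  linarith

theorem Real.mul_sub_log_eq_one_add_log_iff {c w : ℝ} (hc : 0 < c) (hw : 0 < w) :
    w * c - log w = 1 + log c ↔ w = c⁻¹ := by
  constructor
  · intro h
    by_contra hne
    have hlt := log_lt_sub_one_of_pos (mul_pos hw hc) fun h1 => hne (eq_inv_of_mul_eq_one_left h1)
    rw [log_mul hw.ne' hc.ne'] at hlt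
    linarith
  · rintro rfl
    rw [inv_mul_cancel₀ hc.ne', log_inv]
    ring

theorem Complex.sq_norm_mul_sub_two_re_mul_eq {T : ℝ} (hT : T ≠ 0) (a g : ℂ) :
    ‖g‖ ^ 2 * T - 2 * (g * a).re = T * ‖g - starRingEnd ℂ a / T‖ ^ 2 - ‖a‖ ^ 2 / T := by
  simp only [Complex.sq_norm, Complex.normSq_apply, Complex.sub_re, Complex.sub_im,
    Complex.div_re, Complex.div_im, Complex.mul_re, Complex.ofReal_re, Complex.ofReal_im,
    Complex.conj_re, Complex.conj_im]
  field_simp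
  ring

theorem wmmse_unique_minimizer_general
    (I : ℝ) (hI : 0 < I)
    (a : ℂ)
    (T : ℝ) (hT : T = I + ‖a‖ ^ 2)
    (ε : ℂ → ℝ) (hε : ∀ g : ℂ, ε g = ‖g‖ ^ 2 * T - 2 * (g * a).re + 1)
    (ξ : ℝ → ℂ → ℝ) (hξ : ∀ (w : ℝ) (g : ℂ), ξ w g = w * ε g - Real.log w) :
    ∀ w : ℝ, 0 < w → ∀ g : ℂ,
      ξ w g ≥ 1 - Real.log (T / I) ∧
      (ξ w g = 1 - Real.log (T / I) ↔ w = T / I ∧ g = starRingEnd ℂ a / (T : ℂ)) := by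
  intro w hw g
  have hT0 : 0 < T := by rw [hT]; positivity
  have hIT : 0 < I / T := div_pos hI hT0
  have hε_sq : ε g = T * ‖g - starRingEnd ℂ a / T‖ ^ 2 + I / T := by
    rw [hε, Complex.sq_norm_mul_sub_two_re_mul_eq hT0.ne', hT]
    field_simp
    ring
  have hmmse_le : I / T ≤ ε g := by rw [hε_sq]; exact le_add_of_nonneg_left (by positivity)
  have hmmse_eq : ε g = I / T ↔ g = starRingEnd ℂ a / T := by
    rw [hε_sq, add_eq_right, mul_eq_zero, sq_eq_zero_iff, norm_eq_zero, sub_eq_zero]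
    simp [hT0.ne']
  have hεpos : 0 < ε g := hIT.trans_le hmmse_le
  have hlog_ε : 1 + log (I / T) ≤ 1 + log (ε g) := by gcongr
  have hbound := one_add_log_le_mul_sub_log hεpos hw
  have hlog_inv : log (T / I) = -log (I / T) := by rw [← log_inv, inv_div]
  rw [hξ, hlog_inv, sub_neg_eq_add]
  refine ⟨hlog_ε.trans hbound, ⟨fun heq => ?_, ?_⟩⟩
  · have hεg : ε g = I / T :=
      log_injOn_pos hεpos (div_pos hI hT0) (by linarith)
    rw [hεg, mul_sub_log_eq_one_add_log_iff (div_pos hI hT0) hw, inv_div] at heq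
    exact ⟨heq, hmmse_eq.mp hεg⟩
  · rintro ⟨rfl, hg⟩
    rw [hmmse_eq.mpr hg, mul_sub_log_eq_one_add_log_iff hIT (div_pos hT0 hI), inv_div]

/-- The pair `(w*, g*) = (T/I, conj(a)/T)` is the unique global
minimizer of the weighted MSE `ξ(w,g) = w ε(g) − ln w` on `(0, ∞) × ℂ`: for all
`w > 0` and `g ∈ ℂ` one has `ξ(w, g) ≥ 1 − ln(T/I)`, with equality iff
`(w, g) = (w*, g*)`. -/
theorem wmmse_unique_minimizer
    (N : ℕ) (hN : 1 ≤ N) (h p : Fin N → ℂ) (I : ℝ) (hI : 0 < I)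
    (a : ℂ) (ha : a = ∑ i, starRingEnd ℂ (h i) * p i)
    (T : ℝ) (hT : T = I + ‖a‖ ^ 2)
    (ε : ℂ → ℝ) (hε : ∀ g : ℂ, ε g = ‖g‖ ^ 2 * T - 2 * (g * a).re + 1)
    (ξ : ℝ → ℂ → ℝ) (hξ : ∀ (w : ℝ) (g : ℂ), ξ w g = w * ε g - Real.log w) :
    ∀ w : ℝ, 0 < w → ∀ g : ℂ,
      ξ w g ≥ 1 - Real.log (T / I) ∧
      (ξ w g = 1 - Real.log (T / I) ↔ w = T / I ∧ g = starRingEnd ℂ a / (T : ℂ)) :=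
  wmmse_unique_minimizer_general I hI a T hT ε hε ξ hξ
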